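/- arXiv:2312.05844 — 2 statements merged into one kernel-verified Lean document; each statement's English description precedes it below -/
import Mathlib

section
/- For all x ∈ ℂ and τ ∈ ℂ with Im τ > 0, one has θ(x, 2τ)² + θ_{1/2,0}(x, 2τ)² = θ(x, τ)·θ(0, τ). -/
open Complex

/-- The Jacobi theta function `θ(x, τ) = ∑_{m ∈ ℤ} exp(πiτm² + 2πimx)`. -/
noncomputable def theta (x τ : ℂ) : ℂ :=
  ∑' m : ℤ, Complex.exp (Real.pi * Complex.I * τ * (m : ℂ) ^ 2
    + 2 * Real.pi * Complex.I * (m : ℂ) * x)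

/-- The theta function with real characteristics `(a, b)`:
`θ_{a,b}(x, τ) = ∑_{m ∈ ℤ} exp(πiτ(m+a)² + 2πi(m+a)(x+b))`. -/
noncomputable def thetaChar (a b : ℝ) (x τ : ℂ) : ℂ :=
  ∑' m : ℤ, Complex.exp (Real.pi * Complex.I * τ * ((m : ℂ) + (a : ℂ)) ^ 2
    + 2 * Real.pi * Complex.I * ((m : ℂ) + (a : ℂ)) * (x + (b : ℂ)))
/-- The set of lattice points with even coordinate sum. -/
def evenSet : Set (ℤ × ℤ) := {pq | (pq.1 + pq.2) % 2 = 0}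

/-- `ℤ × ℤ ≃ evenSet` via `(m, n) ↦ (m + n, m - n)`. -/
def evenEquiv : (ℤ × ℤ) ≃ evenSet where
  toFun mn := ⟨(mn.1 + mn.2, mn.1 - mn.2), by simp only [evenSet, Set.mem_setOf_eq]; omega⟩
  invFun p := (((p : ℤ × ℤ).1 + (p : ℤ × ℤ).2) / 2, ((p : ℤ × ℤ).1 - (p : ℤ × ℤ).2) / 2)
  left_inv := fun ⟨m, n⟩ => by ext <;> simp <;> omega
  right_inv := fun ⟨⟨p, q⟩, h⟩ => by
    have h' : (p + q) % 2 = 0 := h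
    apply Subtype.ext
    simp only
    ext <;> simp <;> omega

/-- `ℤ × ℤ ≃ evenSetᶜ` via `(m, n) ↦ (m + n + 1, m - n)`. -/
def oddEquiv : (ℤ × ℤ) ≃ (evenSetᶜ : Set (ℤ × ℤ)) where
  toFun mn := ⟨(mn.1 + mn.2 + 1, mn.1 - mn.2), by
    simp only [evenSet, Set.mem_compl_iff, Set.mem_setOf_eq]; omega⟩
  invFun p := (((p : ℤ × ℤ).1 + (p : ℤ × ℤ).2 - 1) / 2, ((p : ℤ × ℤ).1 - (p : ℤ × ℤ).2 - 1) / 2)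
  left_inv := fun ⟨m, n⟩ => by ext <;> simp <;> omega
  right_inv := fun ⟨⟨p, q⟩, h⟩ => by
    have h' : ¬ (p + q) % 2 = 0 := h
    apply Subtype.ext
    simp only
    ext <;> simp <;> omega

theorem stmt_12 (x τ : ℂ) (hτ : 0 < τ.im) :
    theta x (2 * τ) ^ 2 + thetaChar (1/2) 0 x (2 * τ) ^ 2 =
      theta x τ * theta 0 τ := by
  have h2τ : 0 < (2 * τ).im := by simp [Complex.mul_im]; linarith
  -- the basic term summability facts
  have hsum : ∀ z σ : ℂ, 0 < σ.im → Summable fun n : ℤ => ‖jacobiTheta₂_term n z σ‖ :=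
    fun z σ hσ => ((summable_jacobiTheta₂_term_iff z σ).mpr hσ).norm
  -- LHS square terms
  set f : ℤ → ℂ := fun m => jacobiTheta₂_term m x (2 * τ) with hf_def
  set c : ℂ := Complex.exp (Real.pi * Complex.I * τ / 2 + Real.pi * Complex.I * x) with hc_def
  set g : ℤ → ℂ := fun m => c * jacobiTheta₂_term m (x + τ) (2 * τ) with hg_def
  have hfs : Summable fun m => ‖f m‖ := hsum x (2 * τ) h2τ
  have hgs : Summable fun m => ‖g m‖ := by
    simp only [hg_def, norm_mul]
    exact (hsum (x + τ) (2 * τ) h2τ).mul_left _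
  -- identification of theta / thetaChar with these series
  have htheta : ∀ z σ : ℂ, theta z σ = ∑' m : ℤ, jacobiTheta₂_term m z σ := by
    intro z σ
    refine tsum_congr fun m => ?_
    rw [jacobiTheta₂_term]
    congr 1
    ring
  have hthetaf : theta x (2 * τ) = ∑' m, f m := htheta x (2 * τ)
  have hthetag : thetaChar (1/2) 0 x (2 * τ) = ∑' m, g m := by
    rw [thetaChar]
    refine tsum_congr fun m => ?_
    simp only [hg_def, hc_def, jacobiTheta₂_term, ← Complex.exp_add]
    congr 1
    push_cast
    ring
  -- the big RHS series
  set F : ℤ × ℤ → ℂ := fun pq => jacobiTheta₂_term pq.1 x τ * jacobiTheta₂_term pq.2 0 τ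
    with hF_def
  have hFs : Summable F := (hsum x τ hτ).mul_norm (hsum 0 τ hτ) |>.of_norm
  have hRHS : theta x τ * theta 0 τ = ∑' pq : ℤ × ℤ, F pq := by
    rw [htheta x τ, htheta 0 τ]
    exact tsum_mul_tsum_of_summable_norm (hsum x τ hτ) (hsum 0 τ hτ)
  -- key term identities
  have key1 : ∀ mn : ℤ × ℤ, f mn.1 * f mn.2 = F (mn.1 + mn.2, mn.1 - mn.2) := by
    intro ⟨m, n⟩
    simp only [hf_def, hF_def, jacobiTheta₂_term, ← Complex.exp_add]
    congr 1
    push_cast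
    ring
  have key2 : ∀ mn : ℤ × ℤ, g mn.1 * g mn.2 = F (mn.1 + mn.2 + 1, mn.1 - mn.2) := by
    intro ⟨m, n⟩
    simp only [hg_def, hc_def, hF_def, jacobiTheta₂_term, ← Complex.exp_add]
    congr 1
    push_cast
    ring
  -- HasSum for the two squares
  have h1 : HasSum (fun mn : ℤ × ℤ => f mn.1 * f mn.2) (theta x (2 * τ) ^ 2) := by
    have hs := summable_mul_of_summable_norm hfs hfs
    have := tsum_mul_tsum_of_summable_norm hfs hfs
    rw [← hthetaf, ← pow_two] at this
    exact this ▸ hs.hasSum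
  have h2 : HasSum (fun mn : ℤ × ℤ => g mn.1 * g mn.2) (thetaChar (1/2) 0 x (2 * τ) ^ 2) := by
    have hs := summable_mul_of_summable_norm hgs hgs
    have := tsum_mul_tsum_of_summable_norm hgs hgs
    rw [← hthetag, ← pow_two] at this
    exact this ▸ hs.hasSum
  -- transport along the equivalences
  have H1 : HasSum (F ∘ ((↑) : evenSet → ℤ × ℤ)) (theta x (2 * τ) ^ 2) := by
    rw [← evenEquiv.hasSum_iff]
    convert h1 using 1
    funext mn
    exact (key1 mn).symm
  have H2 : HasSum (F ∘ ((↑) : (evenSetᶜ : Set (ℤ × ℤ)) → ℤ × ℤ))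
      (thetaChar (1/2) 0 x (2 * τ) ^ 2) := by
    rw [← oddEquiv.hasSum_iff]
    convert h2 using 1
    funext mn
    exact (key2 mn).symm
  have := H1.add_isCompl isCompl_compl H2
  rw [hRHS, this.tsum_eq]
end

section
/- For all x ∈ ℂ and τ ∈ ℂ with Im τ > 0, one has the Landen-type transformation for n = 4: [θ(2x, 8τ) + θ_{1/2,0}(2x, 8τ)]² − [θ_{1/4,0}(2x, 8τ) + θ_{3/4,0}(2x, 8τ)]² = θ_{0,1/2}(x, τ)·θ_{0,1/2}(0, τ). -/
open Complex

noncomputable def Tm (a : ℝ) (w σ : ℂ) (m : ℤ) : ℂ :=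
  Complex.exp (Real.pi * Complex.I * σ * ((m : ℂ) + (a : ℂ)) ^ 2
    + 2 * Real.pi * Complex.I * ((m : ℂ) + (a : ℂ)) * w)

lemma Tm_summable {σ : ℂ} (hσ : 0 < σ.im) (a : ℝ) (w : ℂ) : Summable (Tm a w σ) := by
  have h := (summable_jacobiTheta₂_term_iff (w + (a : ℂ) * σ) σ).mpr hσ
  have h2 := h.mul_left (Complex.exp (Real.pi * Complex.I * σ * (a:ℂ)^2
    + 2 * Real.pi * Complex.I * (a:ℂ) * w))
  refine h2.congr fun m => ?_
  simp only [jacobiTheta₂_term, Tm, ← Complex.exp_add]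
  congr 1; ring

lemma Tm_norm_summable {σ : ℂ} (hσ : 0 < σ.im) (a : ℝ) (w : ℂ) :
    Summable (fun m => ‖Tm a w σ m‖) :=
  summable_norm_iff.mpr (Tm_summable hσ a w)

lemma HasSum.of_two_inj {α β : Type*} {f : β → ℂ} {g₁ g₂ : α → β}
    (h₁ : Function.Injective g₁) (h₂ : Function.Injective g₂)
    (hd : ∀ p q, g₁ p ≠ g₂ q)
    (hc : ∀ b, (∃ p, g₁ p = b) ∨ (∃ p, g₂ p = b))
    {A B : ℂ} (hA : HasSum (f ∘ g₁) A) (hB : HasSum (f ∘ g₂) B) :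
    HasSum f (A + B) := by
  have hcompl : IsCompl (Set.range g₁) (Set.range g₂) := by
    constructor
    · rw [Set.disjoint_left]
      rintro b ⟨p, rfl⟩ ⟨q, hq⟩
      exact hd p q hq.symm
    · rw [codisjoint_iff]
      ext b
      simp only [Set.sup_eq_union, Set.mem_union, Set.mem_range, Set.top_eq_univ,
        Set.mem_univ, iff_true]
      exact hc b
  refine HasSum.add_isCompl hcompl ?_ ?_
  · have e1 : ((f ∘ (↑) : Set.range g₁ → ℂ) ∘ (Equiv.ofInjective g₁ h₁)) = f ∘ g₁ :=
      funext fun a => rfl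
    exact (Equiv.ofInjective g₁ h₁).hasSum_iff.mp (e1 ▸ hA)
  · have e2 : ((f ∘ (↑) : Set.range g₂ → ℂ) ∘ (Equiv.ofInjective g₂ h₂)) = f ∘ g₂ :=
      funext fun a => rfl
    exact (Equiv.ofInjective g₂ h₂).hasSum_iff.mp (e2 ▸ hB)

lemma thetaChar_eq (a b : ℝ) (x τ : ℂ) : thetaChar a b x τ = ∑' m, Tm a (x + (b:ℂ)) τ m := rfl

lemma theta_eq (x τ : ℂ) : theta x τ = ∑' m, Tm 0 x τ m :=
  (tsum_congr fun m => by rw [Tm, Complex.ofReal_zero, add_zero]).symm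

theorem stmt_16 (x τ : ℂ) (hτ : 0 < τ.im) :
    (theta (2 * x) (8 * τ) + thetaChar (1/2) 0 (2 * x) (8 * τ)) ^ 2
      - (thetaChar (1/4) 0 (2 * x) (8 * τ) + thetaChar (3/4) 0 (2 * x) (8 * τ)) ^ 2 =
      thetaChar 0 (1/2) x τ * thetaChar 0 (1/2) 0 τ := by
  have h2τ : 0 < (2 * τ).im := by
    rw [Complex.mul_im]; norm_num; linarith
  have h8τ : 0 < (8 * τ).im := by
    rw [Complex.mul_im]; norm_num; linarith
  set F : ℤ → ℂ := Tm 0 x (2 * τ) with hF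
  set G : ℤ → ℂ := Tm (1/2) x (2 * τ) with hG
  -- even/odd bijection data on ℤ
  have hinj1 : Function.Injective (fun m : ℤ => 2 * m) := fun a b h => by
    dsimp only at h; omega
  have hinj2 : Function.Injective (fun m : ℤ => 2 * m + 1) := fun a b h => by
    dsimp only at h; omega
  have hd12 : ∀ p q : ℤ, (fun m : ℤ => 2 * m) p ≠ (fun m : ℤ => 2 * m + 1) q := by
    intro p q; simp only []; omega
  have hc12 : ∀ b : ℤ, (∃ p, 2 * p = b) ∨ (∃ p, 2 * p + 1 = b) := by
    intro b
    rcases Int.even_or_odd b with ⟨k, hk⟩ | ⟨k, hk⟩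
    · exact Or.inl ⟨k, by omega⟩
    · exact Or.inr ⟨k, by omega⟩
  -- Step 1: θ(2x,8τ) + θ_{1/2,0}(2x,8τ) = ∑ F
  have hsum1 : HasSum F (theta (2*x) (8*τ) + thetaChar (1/2) 0 (2*x) (8*τ)) := by
    refine HasSum.of_two_inj hinj1 hinj2 hd12 hc12 ?_ ?_
    · have e : (F ∘ fun m : ℤ => 2 * m) = Tm 0 (2*x) (8*τ) := by
        funext m
        simp only [hF, Function.comp_apply, Tm]
        congr 1; push_cast; ring
      rw [e, theta_eq]
      exact (Tm_summable h8τ 0 (2*x)).hasSum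
    · have e : (F ∘ fun m : ℤ => 2 * m + 1) = Tm (1/2) (2*x + ((0:ℝ):ℂ)) (8*τ) := by
        funext m
        simp only [hF, Function.comp_apply, Tm]
        congr 1; push_cast; ring
      rw [e, thetaChar_eq]
      exact (Tm_summable h8τ (1/2) (2*x + ((0:ℝ):ℂ))).hasSum
  -- Step 2: θ_{1/4,0}(2x,8τ) + θ_{3/4,0}(2x,8τ) = ∑ G
  have hsum2 : HasSum G (thetaChar (1/4) 0 (2*x) (8*τ) + thetaChar (3/4) 0 (2*x) (8*τ)) := by
    refine HasSum.of_two_inj hinj1 hinj2 hd12 hc12 ?_ ?_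
    · have e : (G ∘ fun m : ℤ => 2 * m) = Tm (1/4) (2*x + ((0:ℝ):ℂ)) (8*τ) := by
        funext m
        simp only [hG, Function.comp_apply, Tm]
        congr 1; push_cast; ring
      rw [e, thetaChar_eq]
      exact (Tm_summable h8τ (1/4) (2*x + ((0:ℝ):ℂ))).hasSum
    · have e : (G ∘ fun m : ℤ => 2 * m + 1) = Tm (3/4) (2*x + ((0:ℝ):ℂ)) (8*τ) := by
        funext m
        simp only [hG, Function.comp_apply, Tm]
        congr 1; push_cast; ring
      rw [e, thetaChar_eq]
      exact (Tm_summable h8τ (3/4) (2*x + ((0:ℝ):ℂ))).hasSum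
  -- norm summability
  have hFn : Summable fun m => ‖F m‖ := Tm_norm_summable h2τ 0 x
  have hGn : Summable fun m => ‖G m‖ := Tm_norm_summable h2τ (1/2) x
  -- squares as double sums
  have hFF : (theta (2*x) (8*τ) + thetaChar (1/2) 0 (2*x) (8*τ)) ^ 2
      = ∑' p : ℤ × ℤ, F p.1 * F p.2 := by
    rw [← hsum1.tsum_eq, sq, tsum_mul_tsum_of_summable_norm hFn hFn]
  have hGG : (thetaChar (1/4) 0 (2*x) (8*τ) + thetaChar (3/4) 0 (2*x) (8*τ)) ^ 2
      = ∑' p : ℤ × ℤ, G p.1 * G p.2 := by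
    rw [← hsum2.tsum_eq, sq, tsum_mul_tsum_of_summable_norm hGn hGn]
  -- RHS as double sum
  set t : ℤ × ℤ → ℂ := fun p =>
    Tm 0 (x + ((1/2:ℝ):ℂ)) τ p.1 * Tm 0 ((0:ℂ) + ((1/2:ℝ):ℂ)) τ p.2 with ht
  have hRHS : thetaChar 0 (1/2) x τ * thetaChar 0 (1/2) 0 τ = ∑' p : ℤ × ℤ, t p := by
    rw [thetaChar_eq, thetaChar_eq,
      tsum_mul_tsum_of_summable_norm (Tm_norm_summable hτ 0 (x + ((1/2:ℝ):ℂ)))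
        (Tm_norm_summable hτ 0 ((0:ℂ) + ((1/2:ℝ):ℂ)))]
  -- the key reindexing on ℤ × ℤ
  have hSF : Summable fun p : ℤ × ℤ => F p.1 * F p.2 := summable_mul_of_summable_norm hFn hFn
  have hSG : Summable fun p : ℤ × ℤ => G p.1 * G p.2 := summable_mul_of_summable_norm hGn hGn
  have hinjA : Function.Injective (fun p : ℤ × ℤ => (p.1 + p.2, p.1 - p.2)) := by
    rintro ⟨a, b⟩ ⟨c, d⟩ h
    simp only [Prod.mk.injEq] at h
    exact Prod.ext (by omega) (by omega)
  have hinjB : Function.Injective (fun p : ℤ × ℤ => (p.1 + p.2 + 1, p.1 - p.2)) := by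
    rintro ⟨a, b⟩ ⟨c, d⟩ h
    simp only [Prod.mk.injEq] at h
    exact Prod.ext (by omega) (by omega)
  have hdAB : ∀ p q : ℤ × ℤ, (fun p : ℤ × ℤ => (p.1 + p.2, p.1 - p.2)) p
      ≠ (fun p : ℤ × ℤ => (p.1 + p.2 + 1, p.1 - p.2)) q := by
    rintro ⟨a, b⟩ ⟨c, d⟩ h
    simp only [Prod.mk.injEq] at h
    omega
  have hcAB : ∀ b : ℤ × ℤ, (∃ p : ℤ × ℤ, (p.1 + p.2, p.1 - p.2) = b)
      ∨ (∃ p : ℤ × ℤ, (p.1 + p.2 + 1, p.1 - p.2) = b) := by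
    rintro ⟨m, n⟩
    rcases Int.even_or_odd (m + n) with ⟨k, hk⟩ | ⟨k, hk⟩
    · exact Or.inl ⟨(k, m - k), by simp only [Prod.mk.injEq]; omega⟩
    · exact Or.inr ⟨(k, m - 1 - k), by simp only [Prod.mk.injEq]; omega⟩
  have hkey : HasSum t ((∑' p : ℤ × ℤ, F p.1 * F p.2) + -(∑' p : ℤ × ℤ, G p.1 * G p.2)) := by
    refine HasSum.of_two_inj hinjA hinjB hdAB hcAB ?_ ?_
    · have e : (t ∘ fun p : ℤ × ℤ => (p.1 + p.2, p.1 - p.2))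
          = fun p : ℤ × ℤ => F p.1 * F p.2 := by
        funext p
        obtain ⟨u, v⟩ := p
        simp only [ht, hF, Function.comp_apply, Tm, ← Complex.exp_add]
        rw [show
          (Real.pi * Complex.I * τ * (((u + v : ℤ) : ℂ) + ((0:ℝ):ℂ)) ^ 2
            + 2 * Real.pi * Complex.I * (((u + v : ℤ) : ℂ) + ((0:ℝ):ℂ)) * (x + ((1/2:ℝ):ℂ)))
          + (Real.pi * Complex.I * τ * (((u - v : ℤ) : ℂ) + ((0:ℝ):ℂ)) ^ 2
            + 2 * Real.pi * Complex.I * (((u - v : ℤ) : ℂ) + ((0:ℝ):ℂ)) * ((0:ℂ) + ((1/2:ℝ):ℂ)))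
          = ((Real.pi * Complex.I * (2 * τ) * ((u : ℂ) + ((0:ℝ):ℂ)) ^ 2
            + 2 * Real.pi * Complex.I * ((u : ℂ) + ((0:ℝ):ℂ)) * x)
          + (Real.pi * Complex.I * (2 * τ) * ((v : ℂ) + ((0:ℝ):ℂ)) ^ 2
            + 2 * Real.pi * Complex.I * ((v : ℂ) + ((0:ℝ):ℂ)) * x))
            + (u : ℂ) * (2 * Real.pi * Complex.I) from by push_cast; ring]
        rw [Complex.exp_add, Complex.exp_int_mul_two_pi_mul_I, mul_one]
      rw [e]
      exact hSF.hasSum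
    · have e : (t ∘ fun p : ℤ × ℤ => (p.1 + p.2 + 1, p.1 - p.2))
          = fun p : ℤ × ℤ => -(G p.1 * G p.2) := by
        funext p
        obtain ⟨u, v⟩ := p
        simp only [ht, hG, Function.comp_apply, Tm, ← Complex.exp_add]
        rw [show
          (Real.pi * Complex.I * τ * (((u + v + 1 : ℤ) : ℂ) + ((0:ℝ):ℂ)) ^ 2
            + 2 * Real.pi * Complex.I * (((u + v + 1 : ℤ) : ℂ) + ((0:ℝ):ℂ)) * (x + ((1/2:ℝ):ℂ)))
          + (Real.pi * Complex.I * τ * (((u - v : ℤ) : ℂ) + ((0:ℝ):ℂ)) ^ 2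
            + 2 * Real.pi * Complex.I * (((u - v : ℤ) : ℂ) + ((0:ℝ):ℂ)) * ((0:ℂ) + ((1/2:ℝ):ℂ)))
          = ((Real.pi * Complex.I * (2 * τ) * ((u : ℂ) + (((1:ℝ)/2:ℝ):ℂ)) ^ 2
            + 2 * Real.pi * Complex.I * ((u : ℂ) + (((1:ℝ)/2:ℝ):ℂ)) * x)
          + (Real.pi * Complex.I * (2 * τ) * ((v : ℂ) + (((1:ℝ)/2:ℝ):ℂ)) ^ 2
            + 2 * Real.pi * Complex.I * ((v : ℂ) + (((1:ℝ)/2:ℝ):ℂ)) * x))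
            + (u : ℂ) * (2 * Real.pi * Complex.I) + Real.pi * Complex.I from by push_cast; ring]
        rw [Complex.exp_add, Complex.exp_add, Complex.exp_int_mul_two_pi_mul_I,
          Complex.exp_pi_mul_I]
        ring_nf
      rw [e]
      exact hSG.hasSum.neg
  rw [hFF, hGG, hRHS, hkey.tsum_eq]
  ring
end
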